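/- arXiv:2501.07946 — 8 statements merged into one kernel-verified Lean document; each statement's English description precedes it below -/
import Mathlib

section
/- The characteristic polynomial of the SWLME quasilinear matrix factors as det(λ·I − A) = (λ − u0)^N · ((λ − u0)² − (g·h + Σ_{k=1}^N 3·u_k²/(2k+1))) for every real λ. In particular, the eigenvalues of A are u0 + sqrt(g·h + Σ_{k=1}^N 3·u_k²/(2k+1)), u0 − sqrt(g·h + Σ_{k=1}^N 3·u_k²/(2k+1)), and u0 with algebraic multiplicity N. -/
/-- The quasilinear system matrix of the Shallow Water Linearized Moment Equations
(SWLME) in the conserved variables `(h, h·u0, h·u1, ..., h·uN)`. Rows and columns are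
indexed by `0, 1, ..., N+1`. -/
noncomputable def swlmeMatrix (N : ℕ) (g h u0 : ℝ) (u : ℕ → ℝ) :
    Matrix (Fin (N + 2)) (Fin (N + 2)) ℝ :=
  Matrix.of fun i j =>
    if i.val = 0 then
      (if j.val = 1 then 1 else 0)
    else if i.val = 1 then
      (if j.val = 0 then g * h - u0 ^ 2 - ∑ k ∈ Finset.Icc 1 N, (u k) ^ 2 / (2 * (k : ℝ) + 1)
       else if j.val = 1 then 2 * u0
       else 2 * u (j.val - 1) / (2 * ((j.val : ℝ) - 1) + 1))
    else
      (if j.val = 0 then -2 * u0 * u (i.val - 1)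
       else if j.val = 1 then 2 * u (i.val - 1)
       else if j = i then u0 else 0)

lemma swlme_icc_sum (N : ℕ) (f : ℕ → ℝ) :
    ∑ k ∈ Finset.Icc 1 N, f k = ∑ j : Fin N, f (j.val + 1) := by
  rw [← Finset.Ico_add_one_right_eq_Icc, Finset.sum_Ico_eq_sum_range,
    Fin.sum_univ_eq_sum_range (fun j => f (j + 1))]
  simp [add_comm]

/-- The characteristic polynomial of the SWLME quasilinear matrix factors as
`det(λ·I − A) = (λ − u0)^N · ((λ − u0)² − (g·h + Σ_{k=1}^N 3·u_k²/(2k+1)))` for every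
real `λ`.  In particular, the eigenvalues of `A` are
`u0 ± sqrt(g·h + Σ_{k=1}^N 3·u_k²/(2k+1))` and `u0` with algebraic multiplicity `N`. -/
theorem swlme_charpoly_factorization (N : ℕ) (hN : 1 ≤ N) (g h u0 : ℝ) (u : ℕ → ℝ)
    (lam : ℝ) :
    (lam • (1 : Matrix (Fin (N + 2)) (Fin (N + 2)) ℝ) - swlmeMatrix N g h u0 u).det
      = (lam - u0) ^ N *
        ((lam - u0) ^ 2 - (g * h + ∑ k ∈ Finset.Icc 1 N, 3 * (u k) ^ 2 / (2 * (k : ℝ) + 1))) := by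
  set S : ℝ := ∑ k ∈ Finset.Icc 1 N, (u k) ^ 2 / (2 * (k : ℝ) + 1) with hS
  set M : Matrix (Fin (N + 2)) (Fin (N + 2)) ℝ :=
    lam • (1 : Matrix (Fin (N + 2)) (Fin (N + 2)) ℝ) - swlmeMatrix N g h u0 u with hM
  have hsum3 : ∑ k ∈ Finset.Icc 1 N, 3 * (u k) ^ 2 / (2 * (k : ℝ) + 1) = 3 * S := by
    rw [hS, Finset.mul_sum]
    exact Finset.sum_congr rfl fun k _ => by ring
  rw [hsum3]
  by_cases hlam : lam = u0
  · -- row 2 = 2 u_1 • row 0, determinant is zero; RHS is zero too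
    subst hlam
    set i0 : Fin (N + 2) := ⟨0, by omega⟩ with hi0
    set i2 : Fin (N + 2) := ⟨2, by omega⟩ with hi2
    have hrow : M i2 = (2 * u 1) • M i0 := by
      funext j
      rcases j with ⟨jv, hjv⟩
      simp only [hM, hi0, hi2, Matrix.sub_apply, Matrix.smul_apply, Matrix.one_apply,
        Pi.smul_apply, smul_eq_mul, swlmeMatrix, Matrix.of_apply, Fin.mk.injEq]
      by_cases h0 : jv = 0
      · subst h0; norm_num; try ring
      · by_cases h1 : jv = 1
        · subst h1; norm_num; try ring
        · by_cases h2 : jv = 2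
          · subst h2; norm_num
          · norm_num [h0, h1, h2, Ne.symm h2, Ne.symm h0]
    have h02 : i0 ≠ i2 := by
      rw [hi0, hi2]
      intro hh
      rw [Fin.mk.injEq] at hh
      omega
    have hdet0 : M.det = 0 := by
      calc M.det = (M.updateRow i2 ((2 * u 1) • M i0)).det := by
            rw [← hrow, Matrix.updateRow_eq_self]
        _ = (2 * u 1) * (M.updateRow i2 (M i0)).det := by
            rw [Matrix.det_updateRow_smul]
        _ = 0 := by
            rw [Matrix.det_zero_of_row_eq h02
              (by rw [Matrix.updateRow_ne h02, Matrix.updateRow_self])]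
            ring
    rw [hdet0, sub_self, zero_pow (by omega), zero_mul]
  · -- Schur complement computation
    have ht : lam - u0 ≠ 0 := sub_ne_zero.mpr hlam
    set t : ℝ := lam - u0 with htdef
    have h2N : 2 + N = N + 2 := by omega
    set e : Fin 2 ⊕ Fin N ≃ Fin (N + 2) := finSumFinEquiv.trans (finCongr h2N) with he
    have heL : ∀ a : Fin 2, (e (Sum.inl a)).val = a.val := by
      intro a; simp [he]
    have heR : ∀ b : Fin N, (e (Sum.inr b)).val = 2 + b.val := by
      intro b; simp [he]; omega
    set B : Matrix (Fin 2) (Fin 2) ℝ :=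
      !![lam, -1; -(g * h - u0 ^ 2 - S), lam - 2 * u0] with hB
    set C : Matrix (Fin 2) (Fin N) ℝ :=
      Matrix.of (fun i j => if i = 0 then 0
        else -(2 * u (j.val + 1) / (2 * ((j.val : ℝ) + 1) + 1))) with hC
    set D : Matrix (Fin N) (Fin 2) ℝ :=
      Matrix.of (fun i j => if j = 0 then 2 * u0 * u (i.val + 1) else -(2 * u (i.val + 1))) with hD
    set E : Matrix (Fin N) (Fin N) ℝ := t • (1 : Matrix (Fin N) (Fin N) ℝ) with hE
    have hone : ∀ x y : Fin 2 ⊕ Fin N,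
        (1 : Matrix (Fin (N+2)) (Fin (N+2)) ℝ) (e x) (e y) = if x = y then 1 else 0 := by
      intro x y
      rw [Matrix.one_apply]
      simp [e.apply_eq_iff_eq]
    have hn0 : ∀ x : ℕ, ¬(2 + x = 0) := fun x => by omega
    have hn1 : ∀ x : ℕ, ¬(2 + x = 1) := fun x => by omega
    have hsub : ∀ x : ℕ, 2 + x - 1 = x + 1 := fun x => by omega
    have hblock : Matrix.fromBlocks B C D E = M.submatrix e e := by
      apply Matrix.ext
      rintro (a | a) (b | b)
      · fin_cases a <;> fin_cases b <;>
          simp [hM, swlmeMatrix, hB, heL, hone, hS, -Fin.val_eq_zero_iff]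
      · -- C block
        fin_cases a <;>
          simp [hM, swlmeMatrix, hC, heL, heR, hone, hn0, hn1, hsub, -Fin.val_eq_zero_iff]
        ring_nf
      · -- D block
        fin_cases b <;>
          simp [hM, swlmeMatrix, hD, heL, heR, hone, hn0, hn1, hsub, -Fin.val_eq_zero_iff]
      · -- E block
        simp only [Matrix.fromBlocks_apply₂₂, Matrix.submatrix_apply, hM, Matrix.sub_apply,
          Matrix.smul_apply, smul_eq_mul, swlmeMatrix, Matrix.of_apply, heR, hone, hE,
          Matrix.one_apply, e.apply_eq_iff_eq, Sum.inr.injEq,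
          hn0 _, hn1 _, if_false]
        by_cases hab : a = b
        · subst hab; simp [htdef]
        · have hba : ¬b = a := fun hh => hab hh.symm
          simp [hab, hba]
    have hdet : M.det = (Matrix.fromBlocks B C D E).det := by
      rw [hblock, Matrix.det_submatrix_equiv_self]
    have hmulE : E * (t⁻¹ • (1 : Matrix (Fin N) (Fin N) ℝ)) = 1 := by
      rw [hE, smul_mul_assoc, mul_smul_comm, one_mul, smul_smul, mul_inv_cancel₀ ht, one_smul]
    haveI : Invertible E := invertibleOfRightInverse _ _ hmulE
    have hinvE : ⅟E = t⁻¹ • (1 : Matrix (Fin N) (Fin N) ℝ) := invOf_eq_right_inv hmulE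
    rw [hdet, Matrix.det_fromBlocks₂₂, hinvE]
    have hone0 : (1 : Fin 2) ≠ (0 : Fin 2) := by decide
    have hr0 : ∀ j : Fin 2, (∑ k : Fin N, C 0 k * D k j) = 0 := by
      intro j; simp [hC]
    have hr1 : ∀ j : Fin 2, (∑ k : Fin N, C 1 k * D k j)
        = if j = 0 then -(4 * u0 * S) else 4 * S := by
      intro j
      rw [hS, swlme_icc_sum N (fun k => (u k) ^ 2 / (2 * (k : ℝ) + 1))]
      by_cases hj : j = 0
      · subst hj
        rw [if_pos rfl, Finset.mul_sum, ← Finset.sum_neg_distrib]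
        refine Finset.sum_congr rfl fun k _ => ?_
        simp only [hC, hD, Matrix.of_apply, if_neg hone0, if_pos rfl]
        push_cast
        ring
      · rw [if_neg hj, Finset.mul_sum]
        refine Finset.sum_congr rfl fun k _ => ?_
        simp only [hC, hD, Matrix.of_apply, if_neg hone0, if_neg hj]
        push_cast
        ring
    have hCD : C * D = Matrix.of (fun i j => if i = 0 then 0
        else if j = 0 then -(4 * u0 * S) else 4 * S) := by
      apply Matrix.ext
      intro i j
      rw [Matrix.mul_apply]
      fin_cases i <;> fin_cases j <;>
        simp [Fin.mk_zero, Fin.mk_one, hr0, hr1, hone0]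
    have hBCD : B - C * (t⁻¹ • (1 : Matrix (Fin N) (Fin N) ℝ)) * D
        = B - t⁻¹ • (C * D) := by
      rw [Matrix.mul_smul, Matrix.smul_mul, Matrix.mul_one]
    rw [hBCD, hCD]
    have hdetE : E.det = t ^ N := by
      rw [hE, Matrix.det_smul, Matrix.det_one, mul_one, Fintype.card_fin]
    rw [hdetE]
    have hdet2 : (B - t⁻¹ • Matrix.of (fun i j => if i = (0 : Fin 2) then (0:ℝ)
        else if j = 0 then -(4 * u0 * S) else 4 * S)).det
        = t ^ 2 - (g * h + 3 * S) := by
      rw [Matrix.det_fin_two]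
      simp only [hB, Matrix.sub_apply, Matrix.smul_apply, Matrix.of_apply,
        Matrix.cons_val', Matrix.cons_val_zero, Matrix.cons_val_one, Matrix.head_cons,
        Matrix.empty_val', Matrix.cons_val_fin_one, Matrix.head_fin_const, smul_eq_mul]
      norm_num
      rw [htdef]
      field_simp
      ring
    rw [hdet2]
end

section
/- For each k = 1, ..., N, the (k+1)-st row of the matrix A − u0·I equals 2·u_k times its 0-th row (namely 2·u_k·(−u0, 1, 0, ..., 0)). Consequently, rank(A − u0·I) ≤ 2 and the eigenspace ker(A − u0·I) has dimension at least N. -/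
/-- For each `k = 1, ..., N`, the `(k+1)`-st row of `A − u0·I` equals `2·u_k` times its
`0`-th row (namely `2·u_k·(−u0, 1, 0, ..., 0)`).  Consequently `rank(A − u0·I) ≤ 2` and
the eigenspace `ker(A − u0·I)` has dimension at least `N`. -/
theorem swlme_row_relation_rank_and_kernel (N : ℕ) (hN : 1 ≤ N) (g h u0 : ℝ)
    (u : ℕ → ℝ) :
    (∀ j : Fin (N + 2),
      (swlmeMatrix N g h u0 u - u0 • 1) 0 j
        = if j.val = 0 then -u0 else if j.val = 1 then 1 else 0) ∧
    (∀ k : ℕ, ∀ _hk1 : 1 ≤ k, ∀ _hk2 : k ≤ N, ∀ j : Fin (N + 2),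
      (swlmeMatrix N g h u0 u - u0 • 1) ⟨k + 1, by omega⟩ j
        = 2 * u k * ((swlmeMatrix N g h u0 u - u0 • 1) 0 j)) ∧
    (swlmeMatrix N g h u0 u - u0 • 1).rank ≤ 2 ∧
    N ≤ Module.finrank ℝ
      (LinearMap.ker (swlmeMatrix N g h u0 u - u0 • 1).mulVecLin) := by
  set B := swlmeMatrix N g h u0 u - u0 • (1 : Matrix (Fin (N+2)) (Fin (N+2)) ℝ) with hB
  have hrow0 : ∀ j : Fin (N + 2),
      B 0 j = if j.val = 0 then -u0 else if j.val = 1 then 1 else 0 := by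
    intro j
    rcases j with ⟨jv, hj⟩
    simp only [hB, Matrix.sub_apply, Matrix.smul_apply, Matrix.one_apply, swlmeMatrix,
      Matrix.of_apply, smul_eq_mul, Fin.ext_iff]
    match jv with
    | 0 => simp [Fin.ext_iff]
    | 1 => simp [Fin.ext_iff]
    | (n+2) => simp [Fin.ext_iff]
  have hrowk : ∀ k : ℕ, 1 ≤ k → k ≤ N → ∀ hk : k + 1 < N + 2, ∀ j : Fin (N + 2),
      B ⟨k + 1, hk⟩ j = 2 * u k * (B 0 j) := by
    intro k hk1 hk2 hk j
    obtain ⟨m, rfl⟩ : ∃ m, k = m + 1 := ⟨k - 1, by omega⟩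
    rw [hrow0]
    rcases j with ⟨jv, hj⟩
    simp only [hB, Matrix.sub_apply, Matrix.smul_apply, Matrix.one_apply, swlmeMatrix,
      Matrix.of_apply, smul_eq_mul, Fin.ext_iff, Fin.mk.injEq]
    match jv with
    | 0 => norm_num; ring
    | 1 => norm_num
    | (n+2) =>
      split_ifs <;> first | (exfalso; first | assumption | omega) | ring
  refine ⟨hrow0, fun k hk1 hk2 j => hrowk k hk1 hk2 (by omega) j, ?_⟩
  set C : Matrix (Fin (N+2)) (Fin 2) ℝ := Matrix.of fun i c =>
    if c = 0 then (if i.val = 0 then 1 else if i.val = 1 then 0 else 2 * u (i.val - 1))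
    else (if i.val = 1 then 1 else 0) with hC
  set D : Matrix (Fin 2) (Fin (N+2)) ℝ := Matrix.of fun r j =>
    if r = 0 then B 0 j else B 1 j with hD
  have hfact : B = C * D := by
    ext i j
    rw [Matrix.mul_apply, Fin.sum_univ_two]
    rcases i with ⟨iv, hi⟩
    match iv with
    | 0 => simp [hC, hD]
    | 1 => simp [hC, hD]
    | (m+2) =>
      simp only [hC, hD, Matrix.of_apply, Fin.mk.injEq]
      norm_num
      rw [if_neg (by omega : ¬ m+2=1), if_neg (by omega : ¬ m+2=1)]
      have hstep := hrowk (m+1) (by omega) (by omega) (by omega) j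
      have h2 : B ⟨m+2, hi⟩ j = 2 * u (m+1) * B 0 j := hstep
      rw [h2]; ring
  have hrank : B.rank ≤ 2 := by
    rw [hfact]
    calc (C * D).rank ≤ D.rank := Matrix.rank_mul_le_right C D
    _ ≤ Fintype.card (Fin 2) := D.rank_le_card_height
    _ = 2 := by simp
  refine ⟨hrank, ?_⟩
  have hrn := LinearMap.finrank_range_add_finrank_ker B.mulVecLin
  have hdim : Module.finrank ℝ (Fin (N+2) → ℝ) = N + 2 := by simp
  rw [hdim] at hrn
  have : B.rank = Module.finrank ℝ (LinearMap.range B.mulVecLin) := rfl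
  omega
end

section
/- If g > 0 and h > 0, then the matrix A is diagonalizable over ℝ, i.e., ℝ^{N+2} admits a basis consisting of eigenvectors of A; hence the SWLME system is hyperbolic for positive water heights. -/
namespace SwlmeAux
open scoped Matrix

noncomputable def S (N : ℕ) (u : ℕ → ℝ) : ℝ := ∑ k ∈ Finset.Icc 1 N, (u k) ^ 2 / (2 * (k : ℝ) + 1)

noncomputable def p (N : ℕ) (u : ℕ → ℝ) : Fin (N + 2) → ℝ := fun i =>
  if i.val = 0 then 1 else if i.val = 1 then 0 else 2 * u (i.val - 1)

def e1 (N : ℕ) : Fin (N + 2) → ℝ := fun i => if i.val = 1 then 1 else 0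

def a (N : ℕ) (u0 : ℝ) : Fin (N + 2) → ℝ := fun j =>
  if j.val = 0 then -u0 else if j.val = 1 then 1 else 0

noncomputable def b (N : ℕ) (g h u0 : ℝ) (u : ℕ → ℝ) : Fin (N + 2) → ℝ := fun j =>
  if j.val = 0 then g * h - u0 ^ 2 - S N u
  else if j.val = 1 then u0
  else 2 * u (j.val - 1) / (2 * ((j.val : ℝ) - 1) + 1)

lemma matrix_eq (N : ℕ) (g h u0 : ℝ) (u : ℕ → ℝ) :
    swlmeMatrix N g h u0 u
      = u0 • (1 : Matrix (Fin (N + 2)) (Fin (N + 2)) ℝ)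
        + Matrix.vecMulVec (p N u) (a N u0)
        + Matrix.vecMulVec (e1 N) (b N g h u0 u) := by
  ext i j
  simp only [swlmeMatrix, Matrix.add_apply, Matrix.smul_apply, Matrix.one_apply,
    Matrix.vecMulVec_apply, Matrix.of_apply, p, e1, a, b, S, smul_eq_mul, Fin.ext_iff]
  split_ifs <;> first | omega | ring

lemma vecMulVec_mulVec {n : Type _} [Fintype n] (w x v : n → ℝ) :
    (Matrix.vecMulVec w x).mulVec v = (x ⬝ᵥ v) • w := by
  funext i
  simp only [Matrix.mulVec, dotProduct, Matrix.vecMulVec_apply, Pi.smul_apply,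
    smul_eq_mul]
  rw [Finset.sum_mul]
  exact Finset.sum_congr rfl fun j _ => by ring

lemma mulVec_eq (N : ℕ) (g h u0 : ℝ) (u : ℕ → ℝ) (v : Fin (N + 2) → ℝ) :
    (swlmeMatrix N g h u0 u).mulVec v
      = u0 • v + (a N u0 ⬝ᵥ v) • p N u + (b N g h u0 u ⬝ᵥ v) • e1 N := by
  rw [matrix_eq, Matrix.add_mulVec, Matrix.add_mulVec, Matrix.smul_mulVec,
    Matrix.one_mulVec, vecMulVec_mulVec, vecMulVec_mulVec]

lemma sum_fin_split (N : ℕ) (f : ℕ → ℝ) :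
    ∑ j : Fin (N + 2), f j.val = f 0 + f 1 + ∑ j ∈ Finset.range N, f (j + 2) := by
  rw [Fin.sum_univ_eq_sum_range]
  rw [show N + 2 = N + 1 + 1 from rfl, Finset.sum_range_succ', Finset.sum_range_succ']
  simp only [show ∀ x : ℕ, x + 1 + 1 = x + 2 from fun _ => rfl]
  ring

lemma aux01 : (∀ x : ℕ, (x + 2 = 0) = False) ∧ (∀ x : ℕ, (x + 2 = 1) = False) :=
  ⟨fun x => eq_false (by omega), fun x => eq_false (by omega)⟩

lemma a_dot_p (N : ℕ) (u0 : ℝ) (u : ℕ → ℝ) : a N u0 ⬝ᵥ p N u = -u0 := by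
  have key := sum_fin_split N (fun m : ℕ =>
      (if m = 0 then -u0 else if m = 1 then (1:ℝ) else 0) *
      (if m = 0 then 1 else if m = 1 then 0 else 2 * u (m - 1)))
  refine Eq.trans (Eq.trans ?_ key) ?_
  · rfl
  · simp [aux01.1, aux01.2]

lemma a_dot_e1 (N : ℕ) (u0 : ℝ) : a N u0 ⬝ᵥ e1 N = 1 := by
  have key := sum_fin_split N (fun m : ℕ =>
      (if m = 0 then -u0 else if m = 1 then (1:ℝ) else 0) *
      (if m = 1 then 1 else 0))
  refine Eq.trans (Eq.trans ?_ key) ?_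
  · rfl
  · simp [aux01.1, aux01.2]

lemma b_dot_e1 (N : ℕ) (g h u0 : ℝ) (u : ℕ → ℝ) : b N g h u0 u ⬝ᵥ e1 N = u0 := by
  have key := sum_fin_split N (fun m : ℕ =>
      (if m = 0 then g * h - u0 ^ 2 - S N u else if m = 1 then u0
        else 2 * u (m - 1) / (2 * ((m : ℝ) - 1) + 1)) *
      (if m = 1 then 1 else 0))
  refine Eq.trans (Eq.trans ?_ key) ?_
  · rfl
  · simp [aux01.1, aux01.2]

lemma hS_range (N : ℕ) (u : ℕ → ℝ) :
    S N u = ∑ j ∈ Finset.range N, (u (j + 1)) ^ 2 / (2 * ((j : ℝ) + 1) + 1) := by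
  rw [S, ← Finset.Ico_add_one_right_eq_Icc, Finset.sum_Ico_eq_sum_range]
  refine Finset.sum_congr (by norm_num) fun j _ => ?_
  rw [Nat.add_comm 1 j]
  push_cast
  ring

lemma b_dot_p (N : ℕ) (g h u0 : ℝ) (u : ℕ → ℝ) :
    b N g h u0 u ⬝ᵥ p N u = g * h + 3 * S N u - u0 ^ 2 := by
  have key := sum_fin_split N (fun m : ℕ =>
      (if m = 0 then g * h - u0 ^ 2 - S N u else if m = 1 then u0
        else 2 * u (m - 1) / (2 * ((m : ℝ) - 1) + 1)) *
      (if m = 0 then 1 else if m = 1 then 0 else 2 * u (m - 1)))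
  refine Eq.trans (Eq.trans ?_ key) ?_
  · rfl
  · beta_reduce
    have htail : ∀ j ∈ Finset.range N,
        ((if j + 2 = 0 then g * h - u0 ^ 2 - S N u else if j + 2 = 1 then u0
          else 2 * u (j + 2 - 1) / (2 * (((j + 2 : ℕ) : ℝ) - 1) + 1)) *
        (if j + 2 = 0 then 1 else if j + 2 = 1 then 0 else 2 * u (j + 2 - 1)))
        = 4 * ((u (j + 1)) ^ 2 / (2 * ((j : ℝ) + 1) + 1)) := by
      intro j _
      rw [if_neg (by omega), if_neg (by omega), if_neg (by omega), if_neg (by omega)]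
      have hj : j + 2 - 1 = j + 1 := by omega
      rw [hj]
      push_cast
      ring
    rw [Finset.sum_congr rfl htail, ← Finset.mul_sum, ← hS_range, if_pos rfl, if_pos rfl,
      if_neg (by omega), if_pos rfl]
    norm_num
    ring

end SwlmeAux


open scoped Matrix in
/-- If `g > 0` and `h > 0`, then the SWLME quasilinear matrix `A` is diagonalizable
over `ℝ`, i.e. `ℝ^{N+2}` admits a basis consisting of eigenvectors of `A`; hence the
SWLME system is hyperbolic for positive water heights. -/
theorem swlme_hyperbolic (N : ℕ) (hN : 1 ≤ N) (g h u0 : ℝ) (u : ℕ → ℝ)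
    (hg : 0 < g) (hh : 0 < h) :
    ∃ b : Module.Basis (Fin (N + 2)) ℝ (Fin (N + 2) → ℝ),
      ∀ i : Fin (N + 2), ∃ μ : ℝ,
        (swlmeMatrix N g h u0 u).mulVec (b i) = μ • (b i) := by
  classical
  set A := swlmeMatrix N g h u0 u with hA
  set pp := SwlmeAux.p N u with hpp
  set ee := SwlmeAux.e1 N with hee
  have hS0 : 0 ≤ SwlmeAux.S N u := by
    refine Finset.sum_nonneg fun k hk => div_nonneg (sq_nonneg _) ?_
    positivity
  set c := g * h + 3 * SwlmeAux.S N u with hc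
  have hcpos : 0 < c := by
    have := mul_pos hg hh
    rw [hc]; linarith
  set r := Real.sqrt c with hrdef
  have hr2 : r ^ 2 = c := Real.sq_sqrt hcpos.le
  -- the linear map f = A - u0 • id
  set f : (Fin (N + 2) → ℝ) →ₗ[ℝ] (Fin (N + 2) → ℝ)
    := A.mulVecLin - u0 • LinearMap.id with hfdef
  have hfv : ∀ v, f v = (SwlmeAux.a N u0 ⬝ᵥ v) • pp + (SwlmeAux.b N g h u0 u ⬝ᵥ v) • ee := by
    intro v
    have : f v = A.mulVec v - u0 • v := by
      simp [hfdef, Matrix.mulVecLin_apply]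
    rw [this, hA, SwlmeAux.mulVec_eq, ← hpp, ← hee]
    abel
  have hAfv : ∀ v, A.mulVec v = f v + u0 • v := by
    intro v
    have : f v = A.mulVec v - u0 • v := by
      simp [hfdef, Matrix.mulVecLin_apply]
    rw [this]; abel
  have hfp : f pp = (-u0) • pp + (c - u0 ^ 2) • ee := by
    rw [hfv, SwlmeAux.a_dot_p, SwlmeAux.b_dot_p, hc]
  have hfe : f ee = pp + u0 • ee := by
    rw [hfv, SwlmeAux.a_dot_e1, SwlmeAux.b_dot_e1]
    module
  have hf2p : f (f pp) = c • pp := by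
    rw [hfp, map_add, map_smul, map_smul, hfp, hfe]
    module
  have hf2e : f (f ee) = c • ee := by
    rw [hfe, map_add, map_smul, hfp, hfe]
    module
  have hf3 : ∀ v, f (f (f v)) = c • f v := by
    intro v
    conv_lhs => rw [hfv v]
    rw [map_add, map_smul, map_smul, map_add, map_smul, map_smul, hf2p, hf2e, hfv v]
    module
  -- the set of eigenvectors spans everything
  set E : Set (Fin (N + 2) → ℝ) := {w | ∃ μ : ℝ, A.mulVec w = μ • w} with hE
  have hspanE : Submodule.span ℝ E = ⊤ := by
    rw [eq_top_iff]
    rintro v -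
    have h0 : (v - c⁻¹ • f (f v)) ∈ E := by
      refine ⟨u0, ?_⟩
      rw [hAfv]
      have : f (v - c⁻¹ • f (f v)) = 0 := by
        rw [map_sub, map_smul, hf3, smul_smul, inv_mul_cancel₀ hcpos.ne', one_smul, sub_self]
      rw [this, zero_add]
    have h1 : ((2 * c)⁻¹ • (f (f v) + r • f v)) ∈ E := by
      refine ⟨u0 + r, ?_⟩
      rw [hAfv]
      have : f ((2 * c)⁻¹ • (f (f v) + r • f v)) = r • ((2 * c)⁻¹ • (f (f v) + r • f v)) := by
        rw [map_smul, map_add, map_smul, hf3]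
        rw [← hr2]
        module
      rw [this]
      module
    have h2 : ((2 * c)⁻¹ • (f (f v) - r • f v)) ∈ E := by
      refine ⟨u0 - r, ?_⟩
      rw [hAfv]
      have : f ((2 * c)⁻¹ • (f (f v) - r • f v)) = (-r) • ((2 * c)⁻¹ • (f (f v) - r • f v)) := by
        rw [map_smul, map_sub, map_smul, hf3]
        rw [← hr2]
        module
      rw [this]
      module
    have hsum : v = (v - c⁻¹ • f (f v)) + ((2 * c)⁻¹ • (f (f v) + r • f v))
        + ((2 * c)⁻¹ • (f (f v) - r • f v)) := by
      have hc' : c ≠ 0 := hcpos.ne'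
      match_scalars <;> (field_simp; try ring)
    rw [hsum]
    exact Submodule.add_mem _
      (Submodule.add_mem _ (Submodule.subset_span h0) (Submodule.subset_span h1))
      (Submodule.subset_span h2)
  -- extract a basis out of the spanning set of eigenvectors
  obtain ⟨s, hsE, hsp, hli⟩ := exists_linearIndependent ℝ E
  rw [hspanE] at hsp
  let b0 : Module.Basis s ℝ (Fin (N + 2) → ℝ) :=
    Module.Basis.mk hli (by rw [Subtype.range_coe, hsp])
  haveI : Fintype s := FiniteDimensional.fintypeBasisIndex b0
  have hcard : Fintype.card s = N + 2 := by
    have h1 := Module.finrank_eq_card_basis b0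
    rw [Module.finrank_fin_fun] at h1
    omega
  refine ⟨b0.reindex (Fintype.equivFinOfCardEq hcard), fun i => ?_⟩
  have hmem : (b0.reindex (Fintype.equivFinOfCardEq hcard)) i ∈ E := by
    rw [Module.Basis.reindex_apply, Module.Basis.mk_apply]
    exact hsE ((Fintype.equivFinOfCardEq hcard).symm i).2
  exact hmem
end

section
/- Suppose the functions h·u0, (1/2)·u0² + g·(h + z) + (3/2)·Σ_{k=1}^N u_k²/(2k+1), and u_k/h for each k = 1, ..., N all have identically zero derivative on I. Then (h, u0, u1, ..., uN) is a stationary solution of the SWLME with topography z, i.e., on all of I: (i) (h·u0)' = 0; (ii) (h·u0² + g·h²/2 + Σ_{k=1}^N h·u_k²/(2k+1))' + g·h·z' = 0; and (iii) (2·h·u0·u_k)' − u0·(h·u_k)' = 0 for each k = 1, ..., N. -/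
/-- Suppose on the open interval `I = (a, b)` the functions `h·u0`,
`(1/2)·u0² + g·(h + z) + (3/2)·Σ_{k=1}^N u_k²/(2k+1)`, and `u_k/h` for each
`k = 1, ..., N` all have identically zero derivative.  Then `(h, u0, u1, ..., uN)` is a
stationary solution of the SWLME with topography `z`, i.e. on all of `I`:
(i) `(h·u0)' = 0`;
(ii) `(h·u0² + g·h²/2 + Σ_{k=1}^N h·u_k²/(2k+1))' + g·h·z' = 0`;
(iii) `(2·h·u0·u_k)' − u0·(h·u_k)' = 0` for each `k = 1, ..., N`. -/
theorem swlme_constants_imply_stationary (N : ℕ) (hN : 1 ≤ N) (g : ℝ) (a b : ℝ)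
    (h u0 z : ℝ → ℝ) (u : ℕ → ℝ → ℝ)
    (hdh : ∀ x ∈ Set.Ioo a b, DifferentiableAt ℝ h x)
    (hdu0 : ∀ x ∈ Set.Ioo a b, DifferentiableAt ℝ u0 x)
    (hdz : ∀ x ∈ Set.Ioo a b, DifferentiableAt ℝ z x)
    (hdu : ∀ k ∈ Finset.Icc 1 N, ∀ x ∈ Set.Ioo a b, DifferentiableAt ℝ (u k) x)
    (hpos : ∀ x ∈ Set.Ioo a b, 0 < h x)
    (hC1 : ∀ x ∈ Set.Ioo a b, deriv (fun y => h y * u0 y) x = 0)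
    (hC2 : ∀ x ∈ Set.Ioo a b,
      deriv (fun y => (1 / 2) * (u0 y) ^ 2 + g * (h y + z y)
        + (3 / 2) * ∑ k ∈ Finset.Icc 1 N, (u k y) ^ 2 / (2 * (k : ℝ) + 1)) x = 0)
    (hCk : ∀ k ∈ Finset.Icc 1 N, ∀ x ∈ Set.Ioo a b,
      deriv (fun y => u k y / h y) x = 0) :
    ∀ x ∈ Set.Ioo a b,
      deriv (fun y => h y * u0 y) x = 0 ∧
      deriv (fun y => h y * (u0 y) ^ 2 + g * (h y) ^ 2 / 2
          + ∑ k ∈ Finset.Icc 1 N, h y * (u k y) ^ 2 / (2 * (k : ℝ) + 1)) x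
        + g * h x * deriv z x = 0 ∧
      ∀ k ∈ Finset.Icc 1 N,
        deriv (fun y => 2 * h y * u0 y * u k y) x
          - u0 x * deriv (fun y => h y * u k y) x = 0 := by
  intro x hx
  have hx0 : h x ≠ 0 := (hpos x hx).ne'
  have Hh := (hdh x hx).hasDerivAt
  have Hu0 := (hdu0 x hx).hasDerivAt
  have Hz := (hdz x hx).hasDerivAt
  have Hu : ∀ k ∈ Finset.Icc 1 N, HasDerivAt (u k) (deriv (u k) x) x :=
    fun k hk => (hdu k hk x hx).hasDerivAt
  -- E1
  have E1 : deriv h x * u0 x + h x * deriv u0 x = 0 := by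
    rw [← (Hh.mul Hu0).deriv]; exact hC1 x hx
  -- Ek
  have Ek : ∀ k ∈ Finset.Icc 1 N, deriv (u k) x * h x - u k x * deriv h x = 0 := by
    intro k hk
    have h2 := hCk k hk x hx
    rw [((Hu k hk).fun_div Hh hx0).deriv] at h2
    field_simp at h2
    linarith
  -- E2
  have Hsum : HasDerivAt (fun y => ∑ k ∈ Finset.Icc 1 N, (u k y) ^ 2 / (2 * (k : ℝ) + 1))
      (∑ k ∈ Finset.Icc 1 N, (2 : ℝ) * u k x * deriv (u k) x / (2 * (k : ℝ) + 1)) x := by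
    apply HasDerivAt.fun_sum
    intro k hk
    have := ((Hu k hk).fun_pow 2).div_const (2 * (k : ℝ) + 1)
    convert this using 1
    · rfl
    push_cast
    ring
  have H2 := (((Hu0.fun_pow 2).const_mul ((1:ℝ)/2)).fun_add ((Hh.fun_add Hz).const_mul g)).fun_add
    (Hsum.const_mul ((3:ℝ)/2))
  have E2 := hC2 x hx
  rw [H2.deriv] at E2
  -- goal parts
  refine ⟨hC1 x hx, ?_, ?_⟩
  · have HT := ((Hh.fun_mul (Hu0.fun_pow 2)).fun_add (((Hh.fun_pow 2).const_mul g).div_const 2)).fun_add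
      (HasDerivAt.fun_sum (fun k hk => (Hh.fun_mul ((Hu k hk).fun_pow 2)).div_const (2 * (k : ℝ) + 1)))
    rw [HT.deriv]
    have SR : (∑ k ∈ Finset.Icc 1 N,
        (deriv h x * u k x ^ 2 + h x * ((2 : ℕ) * u k x ^ (2-1) * deriv (u k) x)) / (2 * (k : ℝ) + 1))
        = (3/2) * h x * ∑ k ∈ Finset.Icc 1 N, (2 : ℝ) * u k x * deriv (u k) x / (2 * (k : ℝ) + 1) := by
      rw [Finset.mul_sum]
      refine Finset.sum_congr rfl ?_
      intro k hk
      have e := Ek k hk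
      have hd : (2 * (k:ℝ) + 1) ≠ 0 := by positivity
      push_cast
      field_simp
      linear_combination (-(u k x)) * e
    push_cast at SR ⊢
    linear_combination u0 x * E1 + h x * E2 + SR
  · intro k hk
    have HTk := ((Hh.const_mul (2:ℝ)).fun_mul Hu0).fun_mul (Hu k hk)
    have Hhu := Hh.fun_mul (Hu k hk)
    rw [HTk.deriv, Hhu.deriv]
    linear_combination 2 * u k x * E1 + u0 x * Ek k hk
end

section
/- Suppose (h, u0, u1, ..., uN) satisfies the SWLME stationary equations (i)–(iii) on I and additionally u0(x) ≠ 0 for all x ∈ I. Then the derivatives of the functions h·u0, (1/2)·u0² + g·(h + z) + (3/2)·Σ_{k=1}^N u_k²/(2k+1), and u_k/h for each k = 1, ..., N are identically zero on I; in particular all these quantities are constant on I. -/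
lemma const_of_deriv_zero_Ioo {f : ℝ → ℝ} {a b : ℝ}
    (hd : ∀ x ∈ Set.Ioo a b, DifferentiableAt ℝ f x)
    (h0 : ∀ x ∈ Set.Ioo a b, deriv f x = 0) :
    ∀ x ∈ Set.Ioo a b, ∀ x' ∈ Set.Ioo a b, f x = f x' := by
  have key : ∀ x ∈ Set.Ioo a b, ∀ x' ∈ Set.Ioo a b, x < x' → f x = f x' := by
    intro x hx x' hx' hlt
    have hsub : Set.Icc x x' ⊆ Set.Ioo a b := fun y hy =>
      ⟨lt_of_lt_of_le hx.1 hy.1, lt_of_le_of_lt hy.2 hx'.2⟩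
    obtain ⟨c, hc, hc'⟩ := exists_deriv_eq_slope f hlt
      (fun y hy => (hd y (hsub hy)).continuousAt.continuousWithinAt)
      (fun y hy => (hd y (hsub (Set.Ioo_subset_Icc_self hy))).differentiableWithinAt)
    rw [h0 c (hsub (Set.Ioo_subset_Icc_self hc))] at hc'
    have hne : x' - x ≠ 0 := sub_ne_zero.mpr hlt.ne'
    have := (div_eq_zero_iff.mp hc'.symm).resolve_right hne
    linarith [sub_eq_zero.mp this]
  intro x hx x' hx'
  rcases lt_trichotomy x x' with hc | hc | hc
  · exact key x hx x' hx' hc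
  · rw [hc]
  · exact (key x' hx' x hx hc).symm

/-- Suppose `(h, u0, u1, ..., uN)` satisfies the SWLME stationary equations (i)–(iii)
on the open interval `I = (a, b)` and additionally `u0(x) ≠ 0` for all `x ∈ I`.  Then
the derivatives of the functions `h·u0`,
`(1/2)·u0² + g·(h + z) + (3/2)·Σ_{k=1}^N u_k²/(2k+1)`, and `u_k/h` for each
`k = 1, ..., N` are identically zero on `I`; in particular all these quantities are
constant on `I`. -/
theorem swlme_stationary_implies_constants (N : ℕ) (hN : 1 ≤ N) (g : ℝ) (a b : ℝ)
    (h u0 z : ℝ → ℝ) (u : ℕ → ℝ → ℝ)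
    (hdh : ∀ x ∈ Set.Ioo a b, DifferentiableAt ℝ h x)
    (hdu0 : ∀ x ∈ Set.Ioo a b, DifferentiableAt ℝ u0 x)
    (hdz : ∀ x ∈ Set.Ioo a b, DifferentiableAt ℝ z x)
    (hdu : ∀ k ∈ Finset.Icc 1 N, ∀ x ∈ Set.Ioo a b, DifferentiableAt ℝ (u k) x)
    (hpos : ∀ x ∈ Set.Ioo a b, 0 < h x)
    (hu0ne : ∀ x ∈ Set.Ioo a b, u0 x ≠ 0)
    (heq1 : ∀ x ∈ Set.Ioo a b, deriv (fun y => h y * u0 y) x = 0)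
    (heq2 : ∀ x ∈ Set.Ioo a b,
      deriv (fun y => h y * (u0 y) ^ 2 + g * (h y) ^ 2 / 2
          + ∑ k ∈ Finset.Icc 1 N, h y * (u k y) ^ 2 / (2 * (k : ℝ) + 1)) x
        + g * h x * deriv z x = 0)
    (heq3 : ∀ k ∈ Finset.Icc 1 N, ∀ x ∈ Set.Ioo a b,
      deriv (fun y => 2 * h y * u0 y * u k y) x
        - u0 x * deriv (fun y => h y * u k y) x = 0) :
    (∀ x ∈ Set.Ioo a b,
      deriv (fun y => h y * u0 y) x = 0 ∧
      deriv (fun y => (1 / 2) * (u0 y) ^ 2 + g * (h y + z y)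
        + (3 / 2) * ∑ k ∈ Finset.Icc 1 N, (u k y) ^ 2 / (2 * (k : ℝ) + 1)) x = 0 ∧
      ∀ k ∈ Finset.Icc 1 N, deriv (fun y => u k y / h y) x = 0) ∧
    (∀ x ∈ Set.Ioo a b, ∀ x' ∈ Set.Ioo a b,
      h x * u0 x = h x' * u0 x' ∧
      (1 / 2) * (u0 x) ^ 2 + g * (h x + z x)
          + (3 / 2) * ∑ k ∈ Finset.Icc 1 N, (u k x) ^ 2 / (2 * (k : ℝ) + 1)
        = (1 / 2) * (u0 x') ^ 2 + g * (h x' + z x')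
          + (3 / 2) * ∑ k ∈ Finset.Icc 1 N, (u k x') ^ 2 / (2 * (k : ℝ) + 1) ∧
      ∀ k ∈ Finset.Icc 1 N, u k x / h x = u k x' / h x') := by
  have key : ∀ x ∈ Set.Ioo a b,
      (DifferentiableAt ℝ (fun y => (1 / 2) * (u0 y) ^ 2 + g * (h y + z y)
          + (3 / 2) * ∑ k ∈ Finset.Icc 1 N, (u k y) ^ 2 / (2 * (k : ℝ) + 1)) x ∧
        deriv (fun y => (1 / 2) * (u0 y) ^ 2 + g * (h y + z y)
          + (3 / 2) * ∑ k ∈ Finset.Icc 1 N, (u k y) ^ 2 / (2 * (k : ℝ) + 1)) x = 0) ∧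
      (∀ k ∈ Finset.Icc 1 N, DifferentiableAt ℝ (fun y => u k y / h y) x ∧
        deriv (fun y => u k y / h y) x = 0) := by
    intro x hx
    have hh := (hdh x hx).hasDerivAt
    have hu0 := (hdu0 x hx).hasDerivAt
    have hz := (hdz x hx).hasDerivAt
    have hhne : h x ≠ 0 := (hpos x hx).ne'
    have hu0x : u0 x ≠ 0 := hu0ne x hx
    -- equation (i)
    have e1 : deriv h x * u0 x + h x * deriv u0 x = 0 := by
      have e := (hh.fun_mul hu0).deriv
      rw [heq1 x hx] at e
      linarith [e]
    -- equation (iii): h * u_k' = h' * u_k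
    have rk : ∀ k ∈ Finset.Icc 1 N, h x * deriv (u k) x = deriv h x * u k x := by
      intro k hk
      have huk := (hdu k hk x hx).hasDerivAt
      have e3 := heq3 k hk x hx
      rw [(((hh.const_mul 2).fun_mul hu0).fun_mul huk).deriv, (hh.fun_mul huk).deriv] at e3
      have hz0 : u0 x * (h x * deriv (u k) x - deriv h x * u k x) = 0 := by
        linear_combination e3 - 2 * u k x * e1
      have := (mul_eq_zero.mp hz0).resolve_left hu0x
      linarith [sub_eq_zero.mp this]
    constructor
    · -- the Bernoulli-type invariant
      -- derivative of the sum in equation (ii)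
      have HS2 : HasDerivAt
          (fun y => ∑ k ∈ Finset.Icc 1 N, h y * (u k y) ^ 2 / (2 * (k : ℝ) + 1))
          (∑ k ∈ Finset.Icc 1 N,
            (deriv h x * (u k x) ^ 2 + 2 * h x * u k x * deriv (u k) x) / (2 * (k : ℝ) + 1)) x := by
        apply HasDerivAt.fun_sum
        intro k hk
        have huk := (hdu k hk x hx).hasDerivAt
        have := (hh.fun_mul (huk.fun_pow 2)).div_const (2 * (k : ℝ) + 1)
        refine this.congr_deriv ?_
        push_cast
        ring
      -- derivative of the target sum
      have HS1 : HasDerivAt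
          (fun y => ∑ k ∈ Finset.Icc 1 N, (u k y) ^ 2 / (2 * (k : ℝ) + 1))
          (∑ k ∈ Finset.Icc 1 N,
            2 * u k x * deriv (u k) x / (2 * (k : ℝ) + 1)) x := by
        apply HasDerivAt.fun_sum
        intro k hk
        have huk := (hdu k hk x hx).hasDerivAt
        have := (huk.fun_pow 2).div_const (2 * (k : ℝ) + 1)
        refine this.congr_deriv ?_
        push_cast
        ring
      -- sum relation from (iii)
      have sumrel : ∑ k ∈ Finset.Icc 1 N,
            (deriv h x * (u k x) ^ 2 + 2 * h x * u k x * deriv (u k) x) / (2 * (k : ℝ) + 1)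
          = (3 / 2) * h x * ∑ k ∈ Finset.Icc 1 N,
            2 * u k x * deriv (u k) x / (2 * (k : ℝ) + 1) := by
        rw [Finset.mul_sum]
        apply Finset.sum_congr rfl
        intro k hk
        have hk0 : (2 * (k : ℝ) + 1) ≠ 0 := by positivity
        field_simp
        linear_combination (-u k x) * (rk k hk)
      -- equation (ii), rewritten
      have HL : HasDerivAt
          (fun y => h y * (u0 y) ^ 2 + g * (h y) ^ 2 / 2
            + ∑ k ∈ Finset.Icc 1 N, h y * (u k y) ^ 2 / (2 * (k : ℝ) + 1))
          (deriv h x * (u0 x) ^ 2 + h x * (2 * u0 x * deriv u0 x)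
            + g * (2 * h x * deriv h x) / 2
            + ∑ k ∈ Finset.Icc 1 N,
              (deriv h x * (u k x) ^ 2 + 2 * h x * u k x * deriv (u k) x) / (2 * (k : ℝ) + 1)) x := by
        refine HasDerivAt.add (HasDerivAt.add ?_ ?_) HS2
        · have := hh.fun_mul (hu0.fun_pow 2)
          refine this.congr_deriv ?_
          push_cast
          ring
        · have := ((hh.fun_pow 2).const_mul g).div_const 2
          refine this.congr_deriv ?_
          push_cast
          ring
      have e2 := heq2 x hx
      rw [HL.deriv, sumrel] at e2
      -- target derivative
      have HB : HasDerivAt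
          (fun y => (1 / 2) * (u0 y) ^ 2 + g * (h y + z y)
            + (3 / 2) * ∑ k ∈ Finset.Icc 1 N, (u k y) ^ 2 / (2 * (k : ℝ) + 1))
          ((1 / 2) * (2 * u0 x * deriv u0 x) + g * (deriv h x + deriv z x)
            + (3 / 2) * ∑ k ∈ Finset.Icc 1 N,
              2 * u k x * deriv (u k) x / (2 * (k : ℝ) + 1)) x := by
        refine HasDerivAt.add (HasDerivAt.add ?_ ?_) (HS1.const_mul (3 / 2))
        · have := (hu0.fun_pow 2).const_mul (1 / 2)
          refine this.congr_deriv ?_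
          push_cast
          ring
        · exact (hh.add hz).const_mul g
      refine ⟨HB.differentiableAt, ?_⟩
      rw [HB.deriv]
      have hmain : h x * ((1 / 2) * (2 * u0 x * deriv u0 x) + g * (deriv h x + deriv z x)
          + (3 / 2) * ∑ k ∈ Finset.Icc 1 N,
            2 * u k x * deriv (u k) x / (2 * (k : ℝ) + 1)) = 0 := by
        linear_combination e2 - u0 x * e1
      exact (mul_eq_zero.mp hmain).resolve_left hhne
    · -- u_k / h constant
      intro k hk
      have huk := (hdu k hk x hx).hasDerivAt
      have HD := huk.fun_div hh hhne
      refine ⟨HD.differentiableAt, ?_⟩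
      rw [HD.deriv]
      have := rk k hk
      field_simp
      linarith
  constructor
  · intro x hx
    exact ⟨heq1 x hx, (key x hx).1.2, fun k hk => ((key x hx).2 k hk).2⟩
  · intro x hx x' hx'
    refine ⟨?_, ?_, ?_⟩
    · exact const_of_deriv_zero_Ioo (fun y hy => (hdh y hy).mul (hdu0 y hy)) heq1 x hx x' hx'
    · exact const_of_deriv_zero_Ioo (fun y hy => (key y hy).1.1) (fun y hy => (key y hy).1.2)
        x hx x' hx'
    · intro k hk
      exact const_of_deriv_zero_Ioo (fun y hy => ((key y hy).2 k hk).1)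
        (fun y hy => ((key y hy).2 k hk).2) x hx x' hx'
end

section
/- The characteristic polynomial of the pressure-system matrix satisfies det(λ·I − A_P) = λ^{N+1}·(λ² − a²/h²) for every real λ. In particular, the eigenvalues of A_P are a/h, −a/h, and 0 with algebraic multiplicity N+1. -/
/-- The quasilinear matrix of the pressure subsystem of the relaxed SWLME, in the
conserved variables `(h, h·u0, h·u1, ..., h·uN, h·π)` and with flux
`F_P(U) = (0, π, 0, ..., 0, a²·u0)ᵀ`.  Rows and columns are indexed by
`0, 1, ..., N+2`. -/
noncomputable def pressureMatrix (N : ℕ) (a h u0 pr : ℝ) :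
    Matrix (Fin (N + 3)) (Fin (N + 3)) ℝ :=
  Matrix.of fun i j =>
    if i.val = 1 then
      (if j.val = 0 then -pr / h
       else if j.val = N + 2 then 1 / h
       else 0)
    else if i.val = N + 2 then
      (if j.val = 0 then -(a ^ 2 * u0) / h
       else if j.val = 1 then a ^ 2 / h
       else 0)
    else 0

def pressEquiv (N : ℕ) : Fin 3 ⊕ Fin N ≃ Fin (N + 3) where
  toFun x := Sum.elim
    (fun i => if i.val = 0 then (⟨0, by omega⟩ : Fin (N + 3))
              else if i.val = 1 then ⟨1, by omega⟩
              else ⟨N + 2, by omega⟩)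
    (fun k => ⟨k.val + 2, by omega⟩) x
  invFun j :=
    if h0 : j.val = 0 then Sum.inl 0
    else if h1 : j.val = 1 then Sum.inl 1
    else if h2 : j.val = N + 2 then Sum.inl 2
    else Sum.inr ⟨j.val - 2, by have := j.isLt; omega⟩
  left_inv x := by
    rcases x with i | k
    · fin_cases i <;> simp
    · have hk := k.isLt
      dsimp only [Sum.elim_inr]
      rw [dif_neg (by omega), dif_neg (by omega), dif_neg (by omega)]
      simp
  right_inv j := by
    have hj := j.isLt
    by_cases h0 : j.val = 0
    · simp [h0, Fin.ext_iff, -Fin.val_eq_zero_iff]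
    by_cases h1 : j.val = 1
    · simp [h0, h1, Fin.ext_iff, -Fin.val_eq_zero_iff]
    by_cases h2 : j.val = N + 2
    · simp [h0, h1, h2, Fin.ext_iff, -Fin.val_eq_zero_iff]
    · dsimp only
      rw [dif_neg h0, dif_neg h1, dif_neg h2]
      simp [Fin.ext_iff, -Fin.val_eq_zero_iff]
      omega

/-- The characteristic polynomial of the pressure-system matrix satisfies
`det(λ·I − A_P) = λ^{N+1}·(λ² − a²/h²)` for every real `λ`.  In particular, the
eigenvalues of `A_P` are `a/h`, `−a/h`, and `0` with algebraic multiplicity `N+1`. -/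
theorem pressure_charpoly_factorization (N : ℕ) (hN : 1 ≤ N) (a h u0 pr : ℝ)
    (ha : a ≠ 0) (hh : h ≠ 0) (lam : ℝ) :
    (lam • (1 : Matrix (Fin (N + 3)) (Fin (N + 3)) ℝ) - pressureMatrix N a h u0 pr).det
      = lam ^ (N + 1) * (lam ^ 2 - a ^ 2 / h ^ 2) := by
  set M := lam • (1 : Matrix (Fin (N + 3)) (Fin (N + 3)) ℝ) - pressureMatrix N a h u0 pr with hM
  set B : Matrix (Fin 3) (Fin 3) ℝ :=
    !![lam, 0, 0; pr / h, lam, -(1 / h); a ^ 2 * u0 / h, -(a ^ 2 / h), lam] with hB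
  have key : M.submatrix (pressEquiv N) (pressEquiv N) =
      Matrix.fromBlocks B 0 0 (lam • (1 : Matrix (Fin N) (Fin N) ℝ)) := by
    ext x y
    rcases x with i | i <;> rcases y with j | j
    · fin_cases i <;> fin_cases j <;>
        simp [M, pressureMatrix, pressEquiv, Matrix.one_apply, Fin.ext_iff, hB, -Fin.val_eq_zero_iff] <;>
        (try split_ifs) <;>
        first | ring1 | omega | (intro hx; exfalso; omega)
    · have hj := j.isLt
      fin_cases i <;>
        simp [M, pressureMatrix, pressEquiv, Matrix.one_apply, Fin.ext_iff, -Fin.val_eq_zero_iff] <;>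
        (try split_ifs) <;>
        first | ring1 | omega | (intro hx; exfalso; omega)
    · have hi := i.isLt
      fin_cases j <;>
        simp [M, pressureMatrix, pressEquiv, Matrix.one_apply, Fin.ext_iff, -Fin.val_eq_zero_iff] <;>
        (try split_ifs) <;>
        first | ring1 | omega | (intro hx; exfalso; omega)
    · have hi := i.isLt
      have hj := j.isLt
      simp [M, pressureMatrix, pressEquiv, Matrix.one_apply, Fin.ext_iff, -Fin.val_eq_zero_iff] <;>
        (try split_ifs) <;>
        first | ring1 | omega | (intro hx; exfalso; omega)
  have hdet : M.det = (M.submatrix (pressEquiv N) (pressEquiv N)).det :=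
    (Matrix.det_submatrix_equiv_self (pressEquiv N) M).symm
  rw [hdet, key, Matrix.det_fromBlocks_zero₂₁, Matrix.det_smul, Matrix.det_one,
    Matrix.det_fin_three]
  simp [hB, Fintype.card_fin]
  field_simp
  ring
end

section
/- Under these definitions, (hu0)_i^{new} = h_i·u_{0,i} for every i ∈ ℤ; that is, the explicit first-order well-balanced pressure step exactly preserves point values of a stationary solution. -/
/-- The explicit first-order well-balanced pressure step exactly preserves point values
of a stationary solution: if the discrete data `(u_{0,i}, π_i)` are the point values of
a stationary solution `(u0ᵉ, πᵉ)` of the pressure system at the cell centers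
`x_i = i·Δx`, then the updated momentum `(hu0)_i^{new}` produced by the explicit
first-order well-balanced pressure step equals `h_i·u_{0,i}` for every `i ∈ ℤ`. -/
theorem explicit_pressure_step_well_balanced
    (Δx Δt a : ℝ) (hΔx : 0 < Δx) (ha : a ≠ 0)
    (u0e pie : ℝ → ℝ)                    -- stationary solution of the pressure system
    (hd : ℤ → ℝ) (hpos : ∀ i : ℤ, 0 < hd i)
    (u0d pid : ℤ → ℝ)
    (hu0d : ∀ i : ℤ, u0d i = u0e ((i : ℝ) * Δx))
    (hpid : ∀ i : ℤ, pid i = pie ((i : ℝ) * Δx))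
    -- Riemann invariants of the stationary solution
    (wpe wme : ℝ → ℝ)
    (hwpe : ∀ x : ℝ, wpe x = pie x + a * u0e x)
    (hwme : ∀ x : ℝ, wme x = pie x - a * u0e x)
    -- first-order well-balanced reconstructions in cell i
    (Pp Pm : ℤ → ℝ → ℝ)
    (hPp : ∀ i : ℤ, ∀ x : ℝ, Pp i x = wpe x + (pid i + a * u0d i) - wpe ((i : ℝ) * Δx))
    (hPm : ∀ i : ℤ, ∀ x : ℝ, Pm i x = wme x + (pid i - a * u0d i) - wme ((i : ℝ) * Δx))
    -- interface pressure at x_{i+1/2}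
    (pistar : ℤ → ℝ)
    (hpistar : ∀ i : ℤ, pistar i =
      (Pp i ((i : ℝ) * Δx + Δx / 2) + Pm (i + 1) ((i : ℝ) * Δx + Δx / 2)) / 2)
    -- explicit first-order pressure update
    (hu0new : ℤ → ℝ)
    (hupdate : ∀ i : ℤ, hu0new i =
      hd i * u0d i - (Δt / Δx) * (pistar i - pistar (i - 1)
        - pie ((i : ℝ) * Δx + Δx / 2) + pie ((i : ℝ) * Δx - Δx / 2))) :
    ∀ i : ℤ, hu0new i = hd i * u0d i := by
  have hstar : ∀ i : ℤ, pistar i = pie ((i : ℝ) * Δx + Δx / 2) := by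
    intro i
    rw [hpistar, hPp, hPm, hwpe, hwpe, hwme, hwme, hpid, hpid, hu0d, hu0d]
    push_cast
    ring
  intro i
  rw [hupdate, hstar, hstar]
  have : ((i - 1 : ℤ) : ℝ) * Δx + Δx / 2 = (i : ℝ) * Δx - Δx / 2 := by push_cast; ring
  rw [this]
  ring
end

section
/- The steady point values solve the implicit first-order pressure step: setting w₊_i^{new} = w₊ᵉ(x_i) and w₋_i^{new} = w₋ᵉ(x_i) for every i ∈ ℤ satisfies, for every i ∈ ℤ, the implicit equations w₊_i^{new} = w₊_i − (a·Δt/(h_i·Δx))·(P^{new}_{i,w₊}(x_{i+1/2}) − P^{new}_{i−1,w₊}(x_{i−1/2}) − w₊ᵉ(x_{i+1/2}) + w₊ᵉ(x_{i−1/2})) and w₋_i^{new} = w₋_i + (a·Δt/(h_i·Δx))·(P^{new}_{i+1,w₋}(x_{i+1/2}) − P^{new}_{i,w₋}(x_{i−1/2}) − w₋ᵉ(x_{i+1/2}) + w₋ᵉ(x_{i−1/2})); hence the implicit scheme exactly preserves the stationary solution. -/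
/-- The steady point values solve the implicit first-order well-balanced pressure step:
if the current data are point values of the stationary Riemann invariants `w₊ᵉ, w₋ᵉ` at
the cell centers `x_i = i·Δx`, then setting `w₊_i^{new} = w₊ᵉ(x_i)` and
`w₋_i^{new} = w₋ᵉ(x_i)` satisfies the implicit equations of the scheme for every
`i ∈ ℤ`; hence the implicit scheme exactly preserves the stationary solution. -/
theorem implicit_pressure_step_well_balanced
    (Δx Δt a : ℝ) (hΔx : 0 < Δx) (ha : a ≠ 0)
    (u0e pie : ℝ → ℝ)                    -- stationary solution of the pressure system
    (hd : ℤ → ℝ) (hpos : ∀ i : ℤ, 0 < hd i)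
    -- Riemann invariants of the stationary solution
    (wpe wme : ℝ → ℝ)
    (hwpe : ∀ x : ℝ, wpe x = pie x + a * u0e x)
    (hwme : ∀ x : ℝ, wme x = pie x - a * u0e x)
    -- current data: point values of the stationary solution
    (wp wm : ℤ → ℝ)
    (hwp : ∀ i : ℤ, wp i = wpe ((i : ℝ) * Δx))
    (hwm : ∀ i : ℤ, wm i = wme ((i : ℝ) * Δx))
    -- candidate new values: the steady point values
    (wpnew wmnew : ℤ → ℝ)
    (hwpnew : ∀ i : ℤ, wpnew i = wpe ((i : ℝ) * Δx))
    (hwmnew : ∀ i : ℤ, wmnew i = wme ((i : ℝ) * Δx))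
    -- first-order well-balanced reconstructions at the new time
    (Ppnew Pmnew : ℤ → ℝ → ℝ)
    (hPpnew : ∀ j : ℤ, ∀ x : ℝ, Ppnew j x = wpe x + wpnew j - wpe ((j : ℝ) * Δx))
    (hPmnew : ∀ j : ℤ, ∀ x : ℝ, Pmnew j x = wme x + wmnew j - wme ((j : ℝ) * Δx)) :
    ∀ i : ℤ,
      wpnew i = wp i - (a * Δt / (hd i * Δx)) *
        (Ppnew i ((i : ℝ) * Δx + Δx / 2) - Ppnew (i - 1) ((i : ℝ) * Δx - Δx / 2)
          - wpe ((i : ℝ) * Δx + Δx / 2) + wpe ((i : ℝ) * Δx - Δx / 2)) ∧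
      wmnew i = wm i + (a * Δt / (hd i * Δx)) *
        (Pmnew (i + 1) ((i : ℝ) * Δx + Δx / 2) - Pmnew i ((i : ℝ) * Δx - Δx / 2)
          - wme ((i : ℝ) * Δx + Δx / 2) + wme ((i : ℝ) * Δx - Δx / 2)) := by
  intro i
  simp only [hPpnew, hPmnew, hwpnew, hwmnew, hwp, hwm]
  push_cast
  constructor <;> ring
end
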